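/- arXiv:0812.2845 — 6 statements merged into one kernel-verified Lean document; each statement's English description precedes it below -/
import Mathlib

section
/- For positive integers n₁,…,n_s and k, the composition of differential operators (φ_{m¹} x^{n₁+l(m¹)}/l(m¹)! · ∂_x^{l(m¹)}) ⋯ (φ_{m^s} x^{n_s+l(m^s)}/l(m^s)! · ∂_x^{l(m^s)}) applied to x^k, summed over tuples m^i with ‖m^i‖ = n_i, equals Σ B_k(m¹,…,m^s) φ_{m¹}⋯φ_{m^s} x^{‖𝐧‖+k}, where B_k(m¹,…,m^s) = C(k, l(m^s)) · ∏_{i=1}^{s-1} C(‖m^{i+1}‖+⋯+‖m^s‖+k, l(m^i)). -/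
/-!
Each summand is an operator sending monomials to monomials:
`x^{n+l} ∂_x^l x^j / l! = C(j, l) x^{n+j}`, with `C(j, l) = 0` for `l > j`.
Applying the `s` factors to `x^k` from the right, the `i`-th factor meets the monomial
`x^{‖m^{i+1}‖+⋯+‖m^s‖+k}` and so contributes exactly the `i`-th binomial factor of `B_k`.
-/

open PowerSeries

noncomputable def fcomp (A φ : PowerSeries ℝ) : PowerSeries ℝ :=
  PowerSeries.mk fun N => ∑ k ∈ Finset.range (N + 1), coeff k A * coeff N (φ ^ k)

noncomputable def flog (Φ : PowerSeries ℝ) : PowerSeries ℝ :=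
  PowerSeries.mk fun N => ∑ k ∈ Finset.range (N + 1),
    (-1 : ℝ) ^ k * ((k : ℝ) + 1)⁻¹ * coeff N ((Φ - 1) ^ (k + 1))

noncomputable def fexp (f : PowerSeries ℝ) : PowerSeries ℝ :=
  PowerSeries.mk fun N => ∑ k ∈ Finset.range (N + 1),
    (Nat.factorial k : ℝ)⁻¹ * coeff N (f ^ k)

noncomputable def finteg (g : PowerSeries ℝ) : PowerSeries ℝ :=
  PowerSeries.mk fun N => if N = 0 then 0 else coeff (N - 1) g / (N : ℝ)

noncomputable def gammaCM (n : ℕ) (φ : PowerSeries ℝ) : ℝ :=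
  (Nat.factorial n : ℝ) * coeff n (flog (derivativeFun φ))

def splits {α : Type*} : List α → List (List (List α))
  | [] => [[]]
  | a :: l => (splits l).flatMap fun P =>
      match P with
      | [] => [[[a]]]
      | b :: P' => [[a] :: b :: P', (a :: b) :: P']

def Bcoef (k : ℕ) : List (List ℕ) → ℕ
  | [] => 1
  | [m] => Nat.choose k m.length
  | m :: L => Nat.choose ((L.map List.sum).sum + k) m.length * Bcoef k L

noncomputable def Aval (L : List (List ℕ)) : ℝ :=
  (L.map fun B => ((Nat.factorial B.length : ℝ) * ((B.sum : ℝ) + 1))⁻¹).prod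

noncomputable def alphaval (m : ℕ) (l : List ℕ) : ℝ :=
  ((splits l).map fun L => (Nat.choose m L.length : ℝ) * Aval L).sum

noncomputable def Uval (k : ℕ) (m : List ℕ) : ℝ :=
  ((splits m).map fun P => (-1 : ℝ) ^ (P.length + 1) * (Bcoef k P : ℝ)).sum

noncomputable def betaval : List ℕ → ℝ
  | [] => 0
  | [_] => -1
  | l => ((splits l.dropLast).map fun L =>
      Uval l.getLast! (L.map List.sum) * Aval L).sum

def shuffles2 {α : Type*} : List α → List α → Multiset (List α)
  | [], l => {l}
  | k, [] => {k}
  | a :: k, b :: l =>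
      ((shuffles2 k (b :: l)).map (a :: ·)) + ((shuffles2 (a :: k) l).map (b :: ·))
termination_by k l => k.length + l.length

def shc : List ℕ → List ℕ → List ℕ → ℕ
  | [], l, m => if l = m then 1 else 0
  | k, [], m => if k = m then 1 else 0
  | a :: k, b :: l, c :: m =>
      (if a = c then shc k (b :: l) m else 0) + (if b = c then shc (a :: k) l m else 0)
  | _ :: _, _ :: _, [] => 0
termination_by k l _ => k.length + l.length

def tailProd : List ℕ → ℕ
  | [] => 1
  | a :: l => (a + l.sum) * tailProd l

def tp1 : List ℕ → ℕ
  | [] => 1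
  | a :: l => (a + l.sum + 1) * tp1 l

def tpk (k : ℕ) : List ℕ → ℕ
  | [] => 1
  | a :: l => (a + l.sum + k) * tpk k l

def Qm (l : List ℕ) : ℕ := (l.getLast! + 1) * tailProd l.tail

noncomputable def Mval (u : ℕ → ℝ) (l : List ℕ) : ℝ :=
  ((-1 : ℝ) ^ l.length * (l.map u).prod) / (tailProd l : ℝ)

noncomputable def Bop (n : ℕ) (A : PowerSeries ℝ) : PowerSeries ℝ :=
  X ^ (n + 1) * derivativeFun A

open scoped Nat

set_option linter.deprecated false

theorem iterate_derivative_X_pow {R : Type*} [CommSemiring R] (l m : ℕ) :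
    (d⁄dX R)^[l] ((X : R⟦X⟧) ^ m) = (m.descFactorial l : R) • X ^ (m - l) := by
  induction l with
  | zero => simp
  | succ l ih =>
    rw [Function.iterate_succ_apply', ih, Derivation.map_smul, derivative_pow, derivative_X,
      mul_one, Nat.sub_sub, Nat.descFactorial_succ, ← map_natCast (C (R := R)), ← smul_eq_C_mul,
      smul_smul, Nat.cast_mul, mul_comm]

theorem X_pow_mul_iterate_derivative_X_pow {R : Type*} [CommSemiring R] (n l j : ℕ) :
    (X : R⟦X⟧) ^ (n + l) * (d⁄dX R)^[l] (X ^ j) = (j.descFactorial l : R) • X ^ (n + j) := by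
  rw [iterate_derivative_X_pow, mul_smul_comm]
  rcases le_or_gt l j with hle | hlt
  · rw [← pow_add, Nat.add_assoc, Nat.add_sub_cancel' hle]
  · simp [Nat.descFactorial_eq_zero_iff_lt.mpr hlt]

/-- The summand `φ_𝐦 x^{‖𝐦‖+l(𝐦)} ∂_x^{l(𝐦)} / l(𝐦)!` of `F_n`, for `φ_j = c j`. -/
noncomputable def summandOperator (c : ℕ → ℝ) (m : List ℕ) : ℝ⟦X⟧ →ₗ[ℝ] ℝ⟦X⟧ :=
  ((m.map c).prod / (m.length ! : ℝ)) •
    (LinearMap.mulLeft ℝ (X ^ (m.sum + m.length)) ∘ₗ (d⁄dX ℝ).toLinearMap ^ m.length)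

theorem summandOperator_apply (c : ℕ → ℝ) (m : List ℕ) (A : ℝ⟦X⟧) :
    summandOperator c m A = ((m.map c).prod / (m.length ! : ℝ)) •
      (X ^ (m.sum + m.length) * derivativeFun^[m.length] A) := by
  simp only [summandOperator, LinearMap.smul_apply, LinearMap.coe_comp, Module.End.coe_pow,
    Derivation.coeFn_coe, Function.comp_apply, LinearMap.mulLeft_apply]
  rfl

theorem summandOperator_X_pow (c : ℕ → ℝ) (m : List ℕ) (j : ℕ) :
    summandOperator c m (X ^ j) = ((j.choose m.length : ℝ) * (m.map c).prod) • X ^ (m.sum + j) := by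
  have hfac : (m.length ! : ℝ) ≠ 0 := by positivity
  rw [summandOperator_apply, show derivativeFun^[m.length] = (d⁄dX ℝ)^[m.length] from rfl,
    X_pow_mul_iterate_derivative_X_pow, smul_smul, Nat.descFactorial_eq_factorial_mul_choose]
  congr 1
  push_cast
  field_simp

theorem Bcoef_cons (k : ℕ) (m : List ℕ) (L : List (List ℕ)) :
    Bcoef k (m :: L) = ((L.map List.sum).sum + k).choose m.length * Bcoef k L := by
  cases L <;> simp [Bcoef]

theorem foldr_summandOperator_X_pow (c : ℕ → ℝ) (k : ℕ) (L : List (List ℕ)) :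
    L.foldr (fun m A => summandOperator c m A) (X ^ k)
      = ((Bcoef k L : ℝ) * (L.map fun m => (m.map c).prod).prod) •
          X ^ ((L.map List.sum).sum + k) := by
  induction L with
  | nil => simp [Bcoef]
  | cons m L ih =>
    rw [List.foldr_cons, ih, LinearMap.map_smul, summandOperator_X_pow, smul_smul, Bcoef_cons]
    simp only [List.map_cons, List.sum_cons, List.prod_cons, Nat.cast_mul, add_assoc]
    congr 1
    ring

theorem stmt2_general (c : ℕ → ℝ) (s : ℕ) (n : Fin s → ℕ) (k : ℕ) :
    ∑ M : (∀ i : Fin s, Composition (n i)),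
      ((List.finRange s).foldr
        (fun i A =>
          ((((M i).blocks.map c).prod / (Nat.factorial (M i).length : ℝ)) •
            (X ^ (n i + (M i).length) * derivativeFun^[(M i).length] A)))
        ((X : PowerSeries ℝ) ^ k))
    = ∑ M : (∀ i : Fin s, Composition (n i)),
        ((Bcoef k ((List.finRange s).map fun i => (M i).blocks) : ℝ) *
          ((List.finRange s).map fun i => ((M i).blocks.map c).prod).prod) •
          (X : PowerSeries ℝ) ^ ((∑ i, n i) + k) := by
  refine Finset.sum_congr rfl fun M _ => ?_
  have hsum : (((List.finRange s).map fun i => (M i).blocks).map List.sum).sum = ∑ i, n i := by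
    simp [List.map_map, Fin.sum_univ_def, Function.comp_def, Composition.blocks_sum]
  have hfold := foldr_summandOperator_X_pow c k ((List.finRange s).map fun i => (M i).blocks)
  rw [List.foldr_map, hsum, List.map_map] at hfold
  simp only [summandOperator_apply, Composition.blocks_sum] at hfold
  exact hfold

/-- Composition of the homogeneous operator components applied to `x^k`. -/
theorem stmt2 (c : ℕ → ℝ) (s : ℕ) (hs : 0 < s) (n : Fin s → ℕ) (hn : ∀ i, 0 < n i)
    (k : ℕ) (hk : 0 < k) :
    ∑ M : (∀ i : Fin s, Composition (n i)),
      ((List.finRange s).foldr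
        (fun i A =>
          ((((M i).blocks.map c).prod / (Nat.factorial (M i).length : ℝ)) •
            (X ^ (n i + (M i).length) * derivativeFun^[(M i).length] A)))
        ((X : PowerSeries ℝ) ^ k))
    = ∑ M : (∀ i : Fin s, Composition (n i)),
        ((Bcoef k ((List.finRange s).map fun i => (M i).blocks) : ℝ) *
          ((List.finRange s).map fun i => ((M i).blocks.map c).prod).prod) •
          (X : PowerSeries ℝ) ^ ((∑ i, n i) + k) :=
  stmt2_general c s n k
end

section
/- Let φ, ψ ∈ G₂ with coefficients φ_n, ψ_n and let η = ψ ∘ φ with coefficients η_n. Then for every n ≥ 1, η_n = φ_n + ψ_n + Σ_{k=1}^{n-1} Σ_{𝐧 ∈ 𝒩_k} C(n-k+1, l(𝐧)) φ_𝐧 ψ_{n-k}, where the inner sum is over tuples 𝐧 = (n₁,…,n_s) of positive integers with n₁+⋯+n_s = k. -/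
open PowerSeries

/-!
Write `φ = X * ψ` with `ψ(0) = 1`. The coefficient of `x^(m+k)` in `φ^k` is that of `x^m` in
`ψ^k = ∑ⱼ C(k, j) (ψ - 1)^j`, and the coefficient of `x^m` in `(ψ - 1)^j` is a sum over the
compositions of `m` into `j` parts; hence it equals `∑_c C(k, ℓ(c)) φ_c`. In
`η_{n+1} = ∑ₖ ψₖ [x^(n+1)] φ^k` the terms `k = 1` and `k = n + 1` give `φ_{n+1}` and `ψ_{n+1}`,
and the remaining ones, indexed by `n + 1 - k`, give the double sum.
-/

open Finset

instance Composition.instUniqueZero : Unique (Composition 0) where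
  default := Composition.ones 0
  uniq c := Composition.ext (c.blocks_eq_nil.2 rfl)

@[simp]
theorem Composition.blocks_default_zero : (default : Composition 0).blocks = [] := rfl

theorem Composition.sum_filter_length_zero {M : Type*} [AddCommMonoid M] (m : ℕ)
    (F : List ℕ → M) :
    ∑ c : Composition m with c.length = 0, F c.blocks = if m = 0 then F [] else 0 := by
  simp only [Composition.length_eq_zero]
  split_ifs with hm
  · subst hm
    simp
  · simp [hm]

theorem Composition.sum_filter_length_succ {M : Type*} [AddCommMonoid M] (m j : ℕ)
    (F : List ℕ → M) :
    ∑ c : Composition m with c.length = j + 1, F c.blocks =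
      ∑ p ∈ antidiagonal m with p.1 ≠ 0,
        ∑ c : Composition p.2 with c.length = j, F (p.1 :: c.blocks) := by
  rw [sum_sigma']
  symm
  refine sum_bij' (fun x hx => ⟨x.1.1 :: x.2.blocks, ?_, ?_⟩)
    (fun c _ => ⟨(c.blocks.headI, c.blocks.tail.sum),
      ⟨c.blocks.tail, fun hi => c.blocks_pos (List.mem_of_mem_tail hi), rfl⟩⟩)
    ?_ ?_ ?_ ?_ ?_
  · simp only [mem_sigma, mem_filter] at hx
    exact List.forall_mem_cons.2 ⟨Nat.pos_of_ne_zero hx.1.2, fun _ => x.2.blocks_pos⟩ _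
  · simp only [mem_sigma, mem_filter, HasAntidiagonal.mem_antidiagonal] at hx
    simp [x.2.blocks_sum, hx.1.1]
  · rintro ⟨p, c⟩ h
    simp only [mem_sigma, mem_filter] at h
    simp [Composition.length, ← h.2.2]
  · intro c hc
    simp only [mem_filter, mem_univ, true_and] at hc
    obtain ⟨a, l, hl⟩ : ∃ a l, c.blocks = a :: l :=
      List.exists_cons_of_length_eq_add_one hc
    have := c.blocks_sum
    simp_all [Composition.length, (c.blocks_pos (hl ▸ List.mem_cons_self)).ne']
  · rintro ⟨⟨a, b⟩, ⟨l, hl, hsum⟩⟩ -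
    dsimp only at hsum ⊢
    subst hsum
    rfl
  · intro c hc
    simp only [mem_filter, mem_univ, true_and] at hc
    obtain ⟨a, l, hl⟩ : ∃ a l, c.blocks = a :: l :=
      List.exists_cons_of_length_eq_add_one hc
    ext1
    simp [hl]
  · intros; rfl

namespace PowerSeries

theorem coeff_pow_eq_sum_compositions {R : Type*} [CommSemiring R] {u : R⟦X⟧}
    (hu : constantCoeff u = 0) (j m : ℕ) :
    coeff m (u ^ j) =
      ∑ c : Composition m with c.length = j, (c.blocks.map (coeff · u)).prod := by
  induction j generalizing m with
  | zero =>
    rw [Composition.sum_filter_length_zero m fun l => (l.map (coeff · u)).prod]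
    simp [coeff_one]
  | succ j ih =>
    rw [Composition.sum_filter_length_succ m j fun l => (l.map (coeff · u)).prod, pow_succ',
      coeff_mul, sum_filter_of_ne]
    · simp [ih, mul_sum]
    · rintro ⟨a, b⟩ - h ha
      simp_all

variable {R : Type*} [CommRing R]

theorem coeff_pow_eq_sum_compositions_choose {ψ : R⟦X⟧} (hψ : constantCoeff ψ = 1)
    (k m : ℕ) :
    coeff m (ψ ^ k) =
      ∑ c : Composition m, (k.choose c.length : R) * (c.blocks.map (coeff · ψ)).prod := by
  have hu : constantCoeff (ψ - 1) = 0 := by simp [hψ]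
  have hblocks (c : Composition m) :
      (c.blocks.map (coeff · (ψ - 1))).prod = (c.blocks.map (coeff · ψ)).prod := by
    congr 1
    refine List.map_congr_left fun i hi => ?_
    simp [coeff_one, (c.blocks_pos hi).ne']
  have hbinom : ψ ^ k = ∑ j ∈ range (k + 1), C (k.choose j : R) * (ψ - 1) ^ j := by
    conv_lhs => rw [← sub_add_cancel ψ 1, add_pow]
    simp [mul_comm]
  simp_rw [hbinom, map_sum, coeff_C_mul, coeff_pow_eq_sum_compositions hu, hblocks, mul_sum,
    sum_filter]
  rw [sum_comm]
  refine sum_congr rfl fun c _ => ?_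
  rw [sum_ite_eq]
  split_ifs with hc
  · rfl
  · rw [Nat.choose_eq_zero_of_lt (by simpa using hc), Nat.cast_zero, zero_mul]

theorem coeff_add_pow_eq_sum_compositions_choose {φ : R⟦X⟧} (hφ0 : constantCoeff φ = 0)
    (hφ1 : coeff 1 φ = 1) (m k : ℕ) :
    coeff (m + k) (φ ^ k) =
      ∑ c : Composition m,
        (k.choose c.length : R) * (c.blocks.map fun i => coeff (i + 1) φ).prod := by
  set ψ : R⟦X⟧ := mk fun p => coeff (p + 1) φ
  have hφ : φ = X * ψ := by simpa [hφ0] using sub_const_eq_X_mul_shift φ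
  have hψ : constantCoeff ψ = 1 := by simpa [ψ] using hφ1
  rw [hφ, mul_pow, coeff_X_pow_mul, coeff_pow_eq_sum_compositions_choose hψ]
  simp [ψ]

end PowerSeries


/-- Coproduct of the Faà di Bruno coordinate: coefficients of `η = ψ ∘ φ`. -/
theorem stmt3 (φ ψ η : PowerSeries ℝ)
    (hφ0 : coeff 0 φ = 0) (hφ1 : coeff 1 φ = 1)
    (hψ0 : coeff 0 ψ = 0) (hψ1 : coeff 1 ψ = 1)
    (hη : η = fcomp ψ φ) (n : ℕ) (hn : 1 ≤ n) :
    coeff (n + 1) η = coeff (n + 1) φ + coeff (n + 1) ψ +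
      ∑ k ∈ Finset.Icc 1 (n - 1), ∑ c : Composition k,
        (Nat.choose (n - k + 1) c.length : ℝ) *
          (c.blocks.map fun i => coeff (i + 1) φ).prod *
          coeff (n - k + 1) ψ := by
  subst hη
  obtain ⟨p, rfl⟩ : ∃ p, n = p + 1 := ⟨n - 1, by omega⟩
  have hpow := coeff_add_pow_eq_sum_compositions_choose (by simpa using hφ0) hφ1
  have hlast : coeff (p + 2) (φ ^ (p + 2)) = 1 := by
    simpa [Composition.length] using hpow 0 (p + 2)
  have hmid : ∑ k ∈ Icc 1 (p + 1 - 1), ∑ c : Composition k,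
        ((p + 1 - k + 1).choose c.length : ℝ) *
          (c.blocks.map fun i => coeff (i + 1) φ).prod * coeff (p + 1 - k + 1) ψ =
      ∑ j ∈ range p, coeff (j + 2) ψ * coeff (p + 2) (φ ^ (j + 2)) := by
    refine sum_nbij' (fun k => p - k) (fun j => p - j) ?_ ?_ ?_ ?_ ?_
    iterate 4
      intro k hk
      simp only [mem_Icc, mem_range] at hk ⊢
      omega
    · intro k hk
      simp only [mem_Icc] at hk
      rw [show p + 1 - k + 1 = p - k + 2 by omega, show p + 2 = k + (p - k + 2) by omega,
        hpow, mul_sum]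
      exact sum_congr rfl fun _ _ => mul_comm _ _
  rw [hmid, fcomp, coeff_mk, sum_range_succ, sum_range_succ', sum_range_succ', hψ0, hψ1, hlast]
  simp only [zero_add, pow_one, zero_mul, one_mul, mul_one, add_zero]
  ring
end

section
/- Let f(x) = Σ_{n≥1} (f_n/n!) x^n be a formal power series with f(0) = 0 and define φ(x) = ∫₀^x e^{f(t)} dt. Then φ(x) = x + Σ_{𝐧=(n₁,…,n_s)} (1/(l(𝐧)! · 𝐧!)) · (f_𝐧 / (‖𝐧‖+1)) x^{‖𝐧‖+1}, where the sum is over all nonempty tuples of positive integers, 𝐧! = n₁!⋯n_s!, and f_𝐧 = f_{n₁}⋯f_{n_s}. -/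
open PowerSeries

/-!
Expanding `e^f = ∑ f^k / k!`, the `N`-th coefficient of `f^k` is a sum over ordered `k`-tuples of
exponents adding up to `N`; since `f(0) = 0` only tuples of positive exponents contribute, and these
are exactly the compositions of `N` into `k` parts. Integration then divides the `N`-th coefficient
by `N + 1`.
-/

namespace Composition

open Finset

variable {n : ℕ}

noncomputable def blocksFinsupp (c : Composition n) : ℕ →₀ ℕ :=
  Finsupp.onFinset (range c.length) (fun i => c.blocks.getD i 0) fun i hi => by
    by_contra hi'
    exact hi (List.getD_eq_default _ _ (by simpa using hi'))

theorem blocksFinsupp_apply (c : Composition n) (i : ℕ) :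
    c.blocksFinsupp i = c.blocks.getD i 0 := rfl

theorem map_range_blocksFinsupp (c : Composition n) :
    (List.range c.length).map c.blocksFinsupp = c.blocks :=
  List.ext_getElem (by simp) fun i _ h => by simp [blocksFinsupp_apply, List.getElem?_eq_getElem h]

theorem blocksFinsupp_mem_finsuppAntidiag (c : Composition n) :
    c.blocksFinsupp ∈ finsuppAntidiag (range c.length) n := by
  refine mem_finsuppAntidiag.mpr ⟨?_, Finsupp.support_onFinset_subset⟩
  calc ∑ i ∈ range c.length, c.blocksFinsupp i
      = ((List.range c.length).map c.blocksFinsupp).sum := rfl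
    _ = n := by rw [map_range_blocksFinsupp, c.blocks_sum]

theorem exists_blocksFinsupp_eq {k : ℕ} {l : ℕ →₀ ℕ} (hl : l ∈ finsuppAntidiag (range k) n)
    (hpos : ∀ i ∈ range k, l i ≠ 0) : ∃ c : Composition n, c.length = k ∧ c.blocksFinsupp = l := by
  rw [mem_finsuppAntidiag] at hl
  let c : Composition n := ⟨(List.range k).map l, by simpa [Nat.pos_iff_ne_zero] using hpos, hl.1⟩
  refine ⟨c, by simp [c, length], Finsupp.ext fun i => ?_⟩
  rw [blocksFinsupp_apply]
  by_cases hik : i < k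
  · simp [c, hik]
  · rw [List.getD_eq_default _ _ (by simpa [c] using hik)]
    exact (Finsupp.notMem_support_iff.mp fun h => hik (mem_range.mp (hl.2 h))).symm

end Composition

namespace PowerSeries

open Finset

variable {R : Type*} [CommSemiring R]

theorem coeff_pow_eq_sum_compositions_s6 {f : R⟦X⟧} (hf : coeff 0 f = 0) (k N : ℕ) :
    coeff N (f ^ k) = ∑ c : Composition N with c.length = k,
      (c.blocks.map fun i => coeff i f).prod := by
  rw [coeff_pow]
  symm
  refine sum_of_injOn Composition.blocksFinsupp ?inj ?maps ?off ?val
  case inj =>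
    intro c hc d hd hcd
    simp only [coe_filter, mem_univ, true_and, Set.mem_setOf_eq] at hc hd
    ext1
    rw [← c.map_range_blocksFinsupp, ← d.map_range_blocksFinsupp, hc, hd, hcd]
  case maps =>
    intro c hc
    simp only [coe_filter, mem_univ, true_and, Set.mem_setOf_eq] at hc
    simpa [hc] using c.blocksFinsupp_mem_finsuppAntidiag
  case off =>
    intro l hl hl_not_mem
    obtain ⟨i, hi, hli⟩ : ∃ i ∈ range k, l i = 0 := by
      by_contra! hpos
      obtain ⟨c, hc, rfl⟩ := Composition.exists_blocksFinsupp_eq hl hpos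
      exact hl_not_mem ⟨c, by simpa using hc, rfl⟩
    exact prod_eq_zero hi (by rw [hli, hf])
  case val =>
    intro c hc
    simp only [mem_filter, mem_univ, true_and] at hc
    conv_lhs => rw [← c.map_range_blocksFinsupp, List.map_map, hc]
    rfl

end PowerSeries

open Finset

theorem coeff_finteg_succ (g : PowerSeries ℝ) (N : ℕ) :
    coeff (N + 1) (finteg g) = coeff N g / ((N : ℝ) + 1) := by
  simp [finteg]

theorem coeff_fexp {f : PowerSeries ℝ} (hf : coeff 0 f = 0) (N : ℕ) :
    coeff N (fexp f) =
      ∑ c : Composition N, (c.length.factorial : ℝ)⁻¹ * (c.blocks.map fun i => coeff i f).prod := by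
  rw [fexp, coeff_mk, ← sum_fiberwise_of_maps_to (g := Composition.length) (t := range (N + 1))
    fun c _ => mem_range_succ_iff.mpr c.length_le]
  refine sum_congr rfl fun k _ => ?_
  rw [coeff_pow_eq_sum_compositions_s6 hf, mul_sum]
  exact sum_congr rfl fun c hc => by rw [(mem_filter.mp hc).2]

/-- Expansion of `φ(x) = ∫₀ˣ e^{f(t)} dt` in terms of `f_n = n! · coeff n f`. -/
theorem stmt6 (f : PowerSeries ℝ) (hf : coeff 0 f = 0)
    (φ : PowerSeries ℝ) (hφ : φ = finteg (fexp f)) :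
    coeff 0 φ = 0 ∧ coeff 1 φ = 1 ∧ ∀ N : ℕ, 1 ≤ N →
      coeff (N + 1) φ =
        ∑ c : Composition N,
          ((Nat.factorial c.length : ℝ) * ((c.blocks.map Nat.factorial).prod : ℝ))⁻¹ *
            ((c.blocks.map fun i => (Nat.factorial i : ℝ) * coeff i f).prod /
              ((N : ℝ) + 1)) := by
  subst hφ
  refine ⟨by simp [finteg], by simp [finteg, fexp], fun N _ => ?_⟩
  rw [coeff_finteg_succ, coeff_fexp hf, sum_div]
  refine sum_congr rfl fun c _ => ?_
  have hfact : (c.blocks.map fun i => (i.factorial : ℝ)).prod ≠ 0 :=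
    List.prod_ne_zero (by simp [Nat.factorial_ne_zero])
  rw [List.prod_map_mul, Nat.cast_list_prod, List.map_map, Function.comp_def]
  field_simp
end

section
/- The mould M^{n₁,…,n_s} = (-1)^s u_{n₁}⋯u_{n_s}/((n₁+⋯+n_s)(n₂+⋯+n_s)⋯n_s) is symmetral: M^∅ = 1 and for any two nonempty tuples 𝐤, 𝐥 of positive integers, M^𝐤 · M^𝐥 = Σ_𝐦 sh(𝐤,𝐥; 𝐦) M^𝐦, where sh(𝐤,𝐥; 𝐦) is the number of shuffles of 𝐤 and 𝐥 yielding 𝐦. -/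
open PowerSeries

/-! Peeling off the first letter gives `M^{a·m} = -u_a / (a + Σ m) · M^m`, and every shuffle of
`a·k` and `b·l` begins with `a` or with `b`, its letters summing to `x + y` where `x = a + Σ k`,
`y = b + Σ l`. The shuffle relation then follows by induction on `|k| + |l|` from the partial
fraction identity `1 / (x y) = (1 / (x + y)) (1 / x + 1 / y)`. -/

theorem sum_eq_of_mem_shuffles2 {α : Type*} [AddCommMonoid α] (k l m : List α)
    (hm : m ∈ shuffles2 k l) : m.sum = k.sum + l.sum := by
  induction k, l using shuffles2.induct generalizing m with
  | case1 l => simp_all [shuffles2]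
  | case2 a k => simp_all [shuffles2]
  | case3 a k b l ih₁ ih₂ =>
    rw [shuffles2, Multiset.mem_add, Multiset.mem_map, Multiset.mem_map] at hm
    rcases hm with ⟨m, hm, rfl⟩ | ⟨m, hm, rfl⟩
    · simp only [List.sum_cons, ih₁ m hm, add_assoc]
    · simp only [List.sum_cons, ih₂ m hm]
      abel

theorem Mval_nil (u : ℕ → ℝ) : Mval u [] = 1 := by
  simp [Mval, tailProd]

theorem Mval_cons (u : ℕ → ℝ) (a : ℕ) (m : List ℕ) :
    Mval u (a :: m) = -u a / ((a + m.sum : ℕ) : ℝ) * Mval u m := by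
  simp only [Mval, tailProd, List.length_cons, List.map_cons, List.prod_cons, pow_succ,
    Nat.cast_mul]
  rw [div_mul_div_comm]
  ring

theorem sum_map_Mval_cons_shuffles2 (u : ℕ → ℝ) (a : ℕ) (k l : List ℕ) :
    ((shuffles2 k l).map fun m => Mval u (a :: m)).sum =
      -u a / ((a + k.sum + l.sum : ℕ) : ℝ) * ((shuffles2 k l).map (Mval u)).sum := by
  rw [← Multiset.sum_map_mul_left]
  refine congrArg _ (Multiset.map_congr rfl fun m hm => ?_)
  rw [Mval_cons, sum_eq_of_mem_shuffles2 k l m hm, add_assoc]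

theorem Mval_mul_Mval_eq_sum_shuffles2 (u : ℕ → ℝ) (k l : List ℕ)
    (hk : ∀ i ∈ k, 0 < i) (hl : ∀ i ∈ l, 0 < i) :
    Mval u k * Mval u l = ((shuffles2 k l).map (Mval u)).sum := by
  induction k, l using shuffles2.induct with
  | case1 l => simp [shuffles2, Mval_nil]
  | case2 a k => simp [shuffles2, Mval_nil]
  | case3 a k b l ih₁ ih₂ =>
    have ih₁ := ih₁ (fun i hi => hk i (List.mem_cons_of_mem a hi)) hl
    have ih₂ := ih₂ hk fun i hi => hl i (List.mem_cons_of_mem b hi)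
    rw [shuffles2, Multiset.map_add, Multiset.sum_add, Multiset.map_map, Multiset.map_map]
    simp only [Function.comp_def]
    rw [sum_map_Mval_cons_shuffles2, sum_map_Mval_cons_shuffles2, ← ih₁, ← ih₂]
    simp only [Mval_cons, List.sum_cons]
    rw [show b + (a + k.sum) + l.sum = a + k.sum + (b + l.sum) by ring,
      Nat.cast_add (a + k.sum)]
    have hx : 0 < a + k.sum := Nat.add_pos_left (hk a List.mem_cons_self) _
    have hy : 0 < b + l.sum := Nat.add_pos_left (hl b List.mem_cons_self) _
    generalize a + k.sum = x at hx ⊢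
    generalize b + l.sum = y at hy ⊢
    have hxy : ((x : ℝ) + y) ≠ 0 := by positivity
    field_simp

/-- The mould `M` is symmetral: `M^∅ = 1` and `M^𝐤 M^𝐥 = Σ_𝐦 sh(𝐤,𝐥;𝐦) M^𝐦`. -/
theorem stmt12 (u : ℕ → ℝ) :
    Mval u [] = 1 ∧
    ∀ k l : List ℕ, k ≠ [] → l ≠ [] → (∀ i ∈ k, 0 < i) → (∀ i ∈ l, 0 < i) →
      Mval u k * Mval u l = ((shuffles2 k l).map (Mval u)).sum :=
  ⟨Mval_nil u, fun k l _ _ => Mval_mul_Mval_eq_sum_shuffles2 u k l⟩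
end

section
/- Define S^{n₁,…,n_s} = ∏_{i=1}^s (n_i+n_{i+1}+⋯+n_s+1) and Q^{n₁,…,n_s} = (n_s+1)·∏_{i=2}^s (n_i+⋯+n_s), with Q^{n₁} = n₁+1. Then for every nonempty tuple 𝐦 of positive integers: Σ_{t=1}^{l(𝐦)} ((-1)^{t-1}/t) Σ_{𝐧¹,…,𝐧^t} sh(𝐧¹,…,𝐧^t; 𝐦) S^{𝐧¹}⋯S^{𝐧^t} = Q^𝐦, where the inner sum is over t-tuples of nonempty tuples and sh(𝐧¹,…,𝐧^t; 𝐦) counts the shuffles of 𝐧¹,…,𝐧^t equal to 𝐦. -/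
open PowerSeries

/-!
Write `S_t(m)` for the sum over surjections `Fin l(m) → Fin t` of the product of `tp1` over
the blocks. Peel off the first entry `a` of `a :: l`: either `a` joins a block that the rest of
the tuple already hits, multiplying its factor by `a + (block sum) + 1`, or `a` is a singleton
block of weight `a + 1` and the rest is a surjection onto the other `t` blocks. Summing over the
block of `a` gives
`S_{t+1}(a :: l) = ((t+1)(a+1) + Σ l) S_{t+1}(l) + (t+1)(a+1) S_t(l)`.
Against the weights `(-1)^(t-1)/t` the `(a+1)`-terms telescope, so the left-hand side `L`
satisfies `L(a :: l) = (Σ l) L(l)` for `l ≠ []`, which is also the recursion of `Q`.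
-/

open Finset Function

namespace ConnesMoscovici

theorem insert_eq_univ_and_ne_univ_iff {β : Type*} (b : β) (s : Set β) :
    insert b s = Set.univ ∧ s ≠ Set.univ ↔ s = {b}ᶜ := by
  constructor
  · rintro ⟨hins, hs⟩
    have hb : b ∉ s := fun hb => hs (by rwa [Set.insert_eq_of_mem hb] at hins)
    ext y
    by_cases hy : y = b
    · simp [hy, hb]
    · simpa [hy] using Set.ext_iff.mp hins y
  · rintro rfl
    simp [Set.ext_iff, em]

section Surjections

variable {α β κ M : Type*} [AddCommMonoid M]

open Classical in
theorem sum_filter_range_eq_range_eq_sum_surjective [Fintype α] [DecidableEq α] [Fintype β]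
    [Fintype κ] [DecidableEq κ] {e : κ → β} (he : Injective e) (F : (α → β) → M) :
    ∑ g with Set.range g = Set.range e, F g = ∑ h : α → κ with Surjective h, F (e ∘ h) := by
  let compE : (α → κ) ↪ (α → β) := ⟨(e ∘ ·), fun _ _ h => funext fun x => he (congrFun h x)⟩
  refine Eq.trans ?_ (sum_map _ compE F)
  congr 1
  ext g
  simp only [mem_filter, mem_univ, true_and, mem_map]
  constructor
  · intro hg
    obtain ⟨h, rfl⟩ := Set.range_subset_range_iff_exists_comp.mp hg.le
    refine ⟨h, ?_, rfl⟩
    rw [Set.range_comp, ← Set.image_univ (f := e)] at hg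
    exact Set.range_eq_univ.mp (Set.image_injective.mpr he hg)
  · rintro ⟨h, hh, rfl⟩
    change Set.range (e ∘ h) = _
    rw [Set.range_comp, hh.range_eq, Set.image_univ]

theorem sum_filter_surjective_fin_succ [Fintype β] [DecidableEq β] {n : ℕ}
    (F : (Fin (n + 1) → β) → M) :
    ∑ f with Surjective f, F f =
      ∑ b, ∑ g with Surjective (Fin.cons b g : Fin (n + 1) → β), F (Fin.cons b g) := by
  simp only [sum_filter]
  rw [← (Fin.consEquiv fun _ => β).sum_comp, Fintype.sum_prod_type]
  rfl

theorem sum_filter_surjective_cons {n t : ℕ} (i : Fin (t + 1)) (F : (Fin n → Fin (t + 1)) → M) :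
    ∑ g with Surjective (Fin.cons i g : Fin (n + 1) → Fin (t + 1)), F g =
      ∑ g with Surjective g, F g + ∑ h : Fin n → Fin t with Surjective h, F (i.succAbove ∘ h) := by
  classical
  rw [← sum_filter_add_sum_filter_not _ (fun g => Surjective g), filter_filter, filter_filter,
    ← sum_filter_range_eq_range_eq_sum_surjective Fin.succAbove_right_injective, Fin.range_succAbove]
  congr 2
  · ext g
    simp only [mem_filter, mem_univ, true_and, and_iff_right_iff_imp]
    intro hg
    rw [← Set.range_eq_univ, Fin.range_cons, hg.range_eq, Set.insert_eq_of_mem (Set.mem_univ i)]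
  · ext g
    simp only [mem_filter, mem_univ, true_and, ← Set.range_eq_univ, Fin.range_cons]
    exact insert_eq_univ_and_ne_univ_iff i _

end Surjections

section Blocks

variable {α ι : Type*} [DecidableEq ι]

def block (l : List α) (f : Fin l.length → ι) (i : ι) : List α :=
  ((List.finRange l.length).filter fun j => f j = i).map l.get

theorem block_cons (a : α) (l : List α) (i : ι) (g : Fin l.length → ι) (i' : ι) :
    block (a :: l) (Fin.cons i g : Fin (l.length + 1) → ι) i' =
      if i = i' then a :: block l g i' else block l g i' := by
  unfold block
  rw [show List.finRange (a :: l).length = _ from List.finRange_succ]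
  by_cases h : i = i' <;> simp [h, List.filter_map, Function.comp_def]

theorem sum_block_sum [AddCommMonoid α] [Fintype ι] (l : List α) (g : Fin l.length → ι) :
    ∑ i, (block l g i).sum = l.sum := by
  induction l with
  | nil => simp [block]
  | cons a l ih =>
    induction g using Fin.consCases with
    | cons i g =>
      have hsplit : ∀ i', (block (a :: l) (Fin.cons i g : Fin (l.length + 1) → ι) i').sum =
          (if i = i' then a else 0) + (block l g i').sum := by
        intro i'
        rw [block_cons]
        split_ifs <;> simp
      rw [Finset.sum_congr rfl fun i' _ => hsplit i', sum_add_distrib, sum_ite_eq, ih]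
      simp

theorem block_eq_nil {l : List α} {g : Fin l.length → ι} {i : ι} (h : ∀ x, g x ≠ i) :
    block l g i = [] := by
  simp [block, h]

theorem block_comp_injective {κ : Type*} [DecidableEq κ] {e : κ → ι} (he : Injective e)
    (l : List α) (h : Fin l.length → κ) (j : κ) :
    block l (e ∘ h) (e j) = block l h j := by
  simp [block, he.eq_iff]

end Blocks

section Weights

variable {ι : Type*} [DecidableEq ι] [Fintype ι]

def blockWeight (l : List ℕ) (f : Fin l.length → ι) : ℕ :=
  ∏ i, tp1 (block l f i)

theorem blockWeight_cons (a : ℕ) (l : List ℕ) (i : ι) (g : Fin l.length → ι) :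
    blockWeight (a :: l) (Fin.cons i g : Fin (l.length + 1) → ι) =
      (a + (block l g i).sum + 1) * blockWeight l g := by
  have hfactor : ∀ i', tp1 (block (a :: l) (Fin.cons i g : Fin (l.length + 1) → ι) i') =
      (if i = i' then a + (block l g i').sum + 1 else 1) * tp1 (block l g i') := by
    intro i'
    rw [block_cons]
    split_ifs <;> simp [tp1]
  simp only [blockWeight, hfactor, prod_mul_distrib, prod_ite_eq, mem_univ, if_true]

theorem blockWeight_comp_injective {κ : Type*} [DecidableEq κ] [Fintype κ] {e : κ → ι}
    (he : Injective e) (l : List ℕ) (h : Fin l.length → κ) :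
    blockWeight l (e ∘ h) = blockWeight l h := by
  refine (Fintype.prod_of_injective e he _ _ ?_ fun j => ?_).symm
  · intro i hi
    rw [block_eq_nil (g := e ∘ h) fun x hx => hi ⟨h x, hx⟩]
    rfl
  · rw [block_comp_injective he]

end Weights

def surjWeight (l : List ℕ) (t : ℕ) : ℕ :=
  ∑ f : Fin l.length → Fin t with Surjective f, blockWeight l f

theorem surjWeight_cons_succ (a : ℕ) (l : List ℕ) (t : ℕ) :
    surjWeight (a :: l) (t + 1) =
      ((t + 1) * (a + 1) + l.sum) * surjWeight l (t + 1) + (t + 1) * (a + 1) * surjWeight l t := by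
  have hfresh : ∀ (i : Fin (t + 1)) (h : Fin l.length → Fin t),
      (a + (block l (i.succAbove ∘ h) i).sum + 1) * blockWeight l (i.succAbove ∘ h) =
        (a + 1) * blockWeight l h := by
    intro i h
    rw [block_eq_nil (g := i.succAbove ∘ h) fun x => Fin.succAbove_ne i (h x),
      blockWeight_comp_injective Fin.succAbove_right_injective]
    rfl
  have hblocks : ∀ g : Fin l.length → Fin (t + 1),
      ∑ i, (a + (block l g i).sum + 1) = (t + 1) * (a + 1) + l.sum := by
    intro g
    rw [sum_add_distrib, sum_add_distrib, sum_block_sum]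
    simp only [sum_const, card_univ, Fintype.card_fin, smul_eq_mul, mul_one]
    ring
  unfold surjWeight
  refine (sum_filter_surjective_fin_succ (n := l.length) _).trans ?_
  simp only [blockWeight_cons, sum_filter_surjective_cons, hfresh, sum_add_distrib]
  rw [sum_comm]
  simp only [← sum_mul, hblocks, sum_const, card_univ, Fintype.card_fin, smul_eq_mul, mul_sum,
    mul_assoc]

theorem surjWeight_eq_zero_of_length_lt {l : List ℕ} {t : ℕ} (h : l.length < t) :
    surjWeight l t = 0 := by
  refine sum_eq_zero fun f hf => absurd (Fintype.card_le_of_surjective f (mem_filter.mp hf).2) ?_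
  simpa using h

theorem surjWeight_nil_zero : surjWeight [] 0 = 1 := by
  rw [surjWeight, filter_true_of_mem fun f _ y => y.elim0]
  simp [blockWeight]

theorem surjWeight_zero_of_ne_nil {l : List ℕ} (hl : l ≠ []) : surjWeight l 0 = 0 := by
  have : IsEmpty (Fin l.length → Fin 0) := by
    obtain ⟨a, l, rfl⟩ := List.exists_cons_of_ne_nil hl
    exact ⟨fun f => (f 0).elim0⟩
  simp [surjWeight]

theorem sum_Icc_one_eq_sum_range {M : Type*} [AddCommMonoid M] (f : ℕ → M) (N : ℕ) :
    ∑ t ∈ Icc 1 N, f t = ∑ t ∈ range N, f (t + 1) := by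
  rw [← Ico_add_one_right_eq_Icc, sum_Ico_eq_sum_range, Nat.add_sub_cancel]
  simp only [add_comm 1]

theorem sum_Icc_alternating_div_of_recurrence {K : Type*} [Field K] [CharZero K]
    (s s' : ℕ → K) (c d : K) (N : ℕ)
    (hrec : ∀ t, s' (t + 1) = (c * (t + 1) + d) * s (t + 1) + c * (t + 1) * s t)
    (hN : s (N + 1) = 0) :
    ∑ t ∈ Icc 1 (N + 1), (-1) ^ (t + 1) / t * s' t =
      d * ∑ t ∈ Icc 1 N, (-1) ^ (t + 1) / t * s t + c * s 0 := by
  have hterm : ∀ t : ℕ, (-1) ^ (t + 1 + 1) / ((t + 1 : ℕ) : K) * s' (t + 1) =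
      d * ((-1) ^ (t + 1 + 1) / ((t + 1 : ℕ) : K) * s (t + 1)) +
        c * ((-1) ^ (t + 1 + 1) * s (t + 1) - (-1) ^ (t + 1) * s t) := by
    intro t
    have ht : (t : K) + 1 ≠ 0 := by exact_mod_cast t.succ_ne_zero
    rw [hrec]
    push_cast
    field_simp
    ring
  rw [sum_Icc_one_eq_sum_range, sum_Icc_one_eq_sum_range]
  simp only [hterm, sum_add_distrib, ← mul_sum]
  rw [sum_range_sub (fun t => (-1) ^ (t + 1) * s t), sum_range_succ, hN]
  ring

noncomputable def shuffleLog (K : Type*) [Field K] (l : List ℕ) : K :=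
  ∑ t ∈ Icc 1 l.length, (-1) ^ (t + 1) / t * (surjWeight l t : K)

theorem shuffleLog_cons (K : Type*) [Field K] [CharZero K] (a : ℕ) (l : List ℕ) :
    shuffleLog K (a :: l) = l.sum * shuffleLog K l + (a + 1) * surjWeight l 0 := by
  refine sum_Icc_alternating_div_of_recurrence _ _ _ _ l.length (fun t => ?_)
    (by rw [surjWeight_eq_zero_of_length_lt (Nat.lt_succ_self _), Nat.cast_zero])
  rw [surjWeight_cons_succ]
  push_cast
  ring

theorem Qm_singleton (a : ℕ) : Qm [a] = a + 1 := by
  simp [Qm, tailProd]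

theorem Qm_cons_of_ne_nil (a : ℕ) {l : List ℕ} (hl : l ≠ []) : Qm (a :: l) = l.sum * Qm l := by
  obtain ⟨b, l, rfl⟩ := List.exists_cons_of_ne_nil hl
  simp only [Qm, List.getLast!_cons_eq_getLastD, List.getLastD_cons, List.tail_cons, tailProd,
    List.sum_cons]
  ring

theorem shuffleLog_eq_Qm (K : Type*) [Field K] [CharZero K] {l : List ℕ} (hl : l ≠ []) :
    shuffleLog K l = Qm l := by
  induction l with
  | nil => exact absurd rfl hl
  | cons a l ih =>
    rw [shuffleLog_cons]
    rcases eq_or_ne l [] with rfl | hl'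
    · simp [surjWeight_nil_zero, Qm_singleton, shuffleLog]
    · rw [surjWeight_zero_of_ne_nil hl', ih hl', Qm_cons_of_ne_nil a hl']
      push_cast
      ring

end ConnesMoscovici

open Classical in
/-- The sum over `t`-tuples of nonempty tuples weighted by their number of shuffles into `𝐦` is
realized by surjections `f : Fin (l 𝐦) → Fin t`, whose fibers (in order) give the blocks `𝐧^i`. -/
theorem stmt15_general (m : List ℕ) (hne : m ≠ []) :
    ∑ t ∈ Finset.Icc 1 m.length, ((-1 : ℝ) ^ (t + 1) / (t : ℝ)) *
      ∑ f ∈ Finset.univ.filter (fun f : Fin m.length → Fin t => Function.Surjective f),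
        ∏ i : Fin t,
          (tp1 (((List.finRange m.length).filter fun j => f j = i).map m.get) : ℝ)
    = (Qm m : ℝ) := by
  have h := ConnesMoscovici.shuffleLog_eq_Qm ℝ hne
  simp only [ConnesMoscovici.shuffleLog, ConnesMoscovici.surjWeight,
    ConnesMoscovici.blockWeight, Nat.cast_sum, Nat.cast_prod] at h
  exact h

open Classical in
/-- `Σ_t ((-1)^{t-1}/t) Σ sh(𝐧¹,…,𝐧^t;𝐦) S^{𝐧¹}⋯S^{𝐧^t} = Q^𝐦`, where the inner sum
over `t`-tuples of nonempty tuples shuffling to `𝐦` is realized by surjections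
`f : Fin (l 𝐦) → Fin t`, whose fibers (in order) give the blocks `𝐧^i`. -/
theorem stmt15 (m : List ℕ) (hne : m ≠ []) (hm : ∀ i ∈ m, 0 < i) :
    ∑ t ∈ Finset.Icc 1 m.length, ((-1 : ℝ) ^ (t + 1) / (t : ℝ)) *
      ∑ f ∈ Finset.univ.filter (fun f : Fin m.length → Fin t => Function.Surjective f),
        ∏ i : Fin t,
          (tp1 (((List.finRange m.length).filter fun j => f j = i).map m.get) : ℝ)
    = (Qm m : ℝ) :=
  stmt15_general m hne
end

section
/- Define α^𝐧_k = Σ_{t=1}^{l(𝐧)} C(k,t) Σ_{𝐧¹⋯𝐧^t=𝐧} A(𝐧¹,…,𝐧^t) with A as above. For 𝐧 = (n₁,…,n_s) and positive integers k, p₁, set V^{n₁,…,n_s}_{k,p₁} = Σ_{i=1}^s n_i α^{n₁,…,n_i+p₁,…,n_s}_k + (p₁+1) Σ_{i=0}^s α^{n₁,…,n_i,p₁,n_{i+1},…,n_s}_k. Then V^{n₁,…,n_s}_{k,p₁} = (n₁+⋯+n_s+k) α^{n₁,…,n_s}_k. -/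
open PowerSeries

/-!
Write `α_k(l)` as a sum over the splittings `B :: L` of `l` of a weight `g (#L) (length B) (sum B)`
times `A(L)`, with `g = alphaWeight k`. For an arbitrary weight `g`, the operator `V` applied to
such a sum is again such a sum, with weight `vWeight g (sum l) p`; this goes by induction on `l`,
peeling off the first entry, which either forms a block `[a]` or joins the first block
(`consWeight`). Raising an entry of, or inserting `p` into, a later block of sum `a` changes its
weight by a total factor `a + 1` (`blockWeight_add_succ`), so the later blocks enter `vWeight`
only through `S - s + t`. For `g = alphaWeight k` the identity
`(t + 2) C(k, t + 2) = (k - t - 1) C(k, t + 1)` then gives `vWeight g S p = (S + k) • g`.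
-/

theorem ne_nil_of_mem_splits_cons {α : Type*} {a : α} {l : List α} {P : List (List α)}
    (hP : P ∈ splits (a :: l)) : P ≠ [] := by
  obtain ⟨Q, -, hQ⟩ := List.mem_flatMap.1 hP
  rcases Q with _ | ⟨B, Q⟩ <;> aesop

noncomputable def blockWeight (n s : ℕ) : ℝ := ((n.factorial : ℝ) * ((s : ℝ) + 1))⁻¹

theorem Aval_cons (B : List ℕ) (L : List (List ℕ)) :
    Aval (B :: L) = blockWeight B.length B.sum * Aval L := rfl

theorem blockWeight_add_succ (n s p : ℕ) :
    (s : ℝ) * blockWeight n (s + p) + ((p : ℝ) + 1) * ((n : ℝ) + 1) * blockWeight (n + 1) (s + p)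
      = ((s : ℝ) + 1) * blockWeight n s := by
  unfold blockWeight
  push_cast [Nat.factorial_succ]
  field_simp
  ring

theorem add_one_mul_blockWeight_one (p : ℕ) : ((p : ℝ) + 1) * blockWeight 1 p = 1 := by
  unfold blockWeight
  field_simp
  simp

section FirstBlock

variable (g : ℕ → ℕ → ℕ → ℝ)

noncomputable def firstBlockTerm : List (List ℕ) → ℝ
  | [] => 0
  | B :: L => g L.length B.length B.sum * Aval L

noncomputable def firstBlockSum (l : List ℕ) : ℝ := ((splits l).map (firstBlockTerm g)).sum

noncomputable def consWeight (a : ℕ) : ℕ → ℕ → ℕ → ℝ :=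
  fun t n s => g (t + 1) 1 a * blockWeight n s + g t (n + 1) (a + s)

noncomputable def vWeight (S : ℝ) (p : ℕ) : ℕ → ℕ → ℕ → ℝ :=
  fun t n s => (s : ℝ) * g t n (s + p)
    + ((p : ℝ) + 1) * ((n : ℝ) + 1) * g t (n + 1) (s + p)
    + (S - s + t) * g t n s
    + ((p : ℝ) + 1) * blockWeight n s * g (t + 1) 1 p
    + ((t : ℝ) + 1) * g (t + 1) n s

theorem firstBlockSum_singleton (a : ℕ) : firstBlockSum g [a] = g 0 1 a := by
  simp [firstBlockSum, firstBlockTerm, splits, Aval]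

theorem firstBlockSum_cons_cons (a b : ℕ) (m : List ℕ) :
    firstBlockSum g (a :: b :: m) = firstBlockSum (consWeight g a) (b :: m) := by
  rw [firstBlockSum, splits, List.map_flatMap, List.flatMap_def, List.sum_flatten, List.map_map,
    firstBlockSum]
  refine congrArg List.sum (List.map_congr_left fun P hP => ?_)
  obtain ⟨B, P, rfl⟩ := List.exists_cons_of_ne_nil (ne_nil_of_mem_splits_cons hP)
  simp only [Function.comp_apply, List.map_cons, List.map_nil, List.sum_cons, List.sum_nil,
    firstBlockTerm, List.length_cons, List.length_nil, zero_add, Aval_cons, consWeight, add_zero]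
  ring

theorem firstBlockSum_cons (a : ℕ) {m : List ℕ} (hm : m ≠ []) :
    firstBlockSum g (a :: m) = firstBlockSum (consWeight g a) m := by
  obtain ⟨b, m, rfl⟩ := List.exists_cons_of_ne_nil hm
  exact firstBlockSum_cons_cons g a b m

variable {g}

theorem firstBlockSum_add (h : ℕ → ℕ → ℕ → ℝ) (l : List ℕ) :
    firstBlockSum (g + h) l = firstBlockSum g l + firstBlockSum h l := by
  rw [firstBlockSum, firstBlockSum, firstBlockSum, ← List.sum_map_add]
  refine congrArg List.sum (List.map_congr_left fun P _ => ?_)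
  rcases P with _ | ⟨B, P⟩ <;> simp [firstBlockTerm, add_mul]

theorem firstBlockSum_smul (c : ℝ) (l : List ℕ) :
    firstBlockSum (c • g) l = c * firstBlockSum g l := by
  rw [firstBlockSum, firstBlockSum, ← List.sum_map_mul_left]
  refine congrArg List.sum (List.map_congr_left fun P _ => ?_)
  rcases P with _ | ⟨B, P⟩ <;> simp [firstBlockTerm, mul_assoc]

end FirstBlock

/-- `vOp p f l` is `V^l_{k,p}` with `α_k` replaced by `f`. -/
noncomputable def vOp (p : ℕ) (f : List ℕ → ℝ) (l : List ℕ) : ℝ :=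
  (∑ i : Fin l.length, (l.get i : ℝ) * f (l.set i (l.get i + p))) +
    ((p : ℝ) + 1) * ∑ i ∈ Finset.range (l.length + 1), f (l.insertIdx i p)

theorem vOp_nil (p : ℕ) (f : List ℕ → ℝ) : vOp p f [] = ((p : ℝ) + 1) * f [p] := by
  simp [vOp]

theorem vOp_cons (p : ℕ) (f : List ℕ → ℝ) (a : ℕ) (m : List ℕ) :
    vOp p f (a :: m) = a * f ((a + p) :: m) + vOp p (fun m' => f (a :: m')) m
      + ((p : ℝ) + 1) * f (p :: a :: m) := by
  simp only [vOp, List.length_cons, Fin.sum_univ_succ, Finset.sum_range_succ' _ (m.length + 1),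
    List.get_eq_getElem, Fin.val_succ, Fin.val_zero, List.getElem_cons_succ,
    List.getElem_cons_zero, List.set_cons_succ, List.set_cons_zero, List.insertIdx_succ_cons,
    List.insertIdx_zero]
  ring

theorem vOp_congr (p : ℕ) {f₁ f₂ : List ℕ → ℝ} (h : ∀ l ≠ [], f₁ l = f₂ l) (l : List ℕ) :
    vOp p f₁ l = vOp p f₂ l := by
  have hset (i : Fin l.length) (x : ℕ) : l.set i x ≠ [] := by
    rw [Ne, List.set_eq_nil_iff]
    exact List.ne_nil_of_length_pos (Fin.pos i)
  have hins (i : ℕ) (hi : i ∈ Finset.range (l.length + 1)) : l.insertIdx i p ≠ [] := by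
    have hi : i ≤ l.length := Nat.lt_succ_iff.1 (Finset.mem_range.1 hi)
    rw [← List.length_pos_iff, List.length_insertIdx_of_le_length hi]
    omega
  simp only [vOp]
  rw [Finset.sum_congr rfl fun i _ => congrArg _ (h _ (hset i _)),
    Finset.sum_congr rfl fun i hi => h _ (hins i hi)]

theorem consWeight_vWeight (a p : ℕ) (S : ℝ) (g : ℕ → ℕ → ℕ → ℝ) :
    (a : ℝ) • consWeight g (a + p) + vWeight (consWeight g a) S p
      + ((p : ℝ) + 1) • consWeight (consWeight g p) a
    = consWeight (vWeight g ((a : ℝ) + S) p) a := by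
  funext t n s
  have h₁ := blockWeight_add_succ n s p
  have h₂ := add_one_mul_blockWeight_one p
  simp only [Pi.add_apply, Pi.smul_apply, smul_eq_mul, consWeight, vWeight]
  rw [show a + p + s = a + s + p by ring, show a + (s + p) = a + s + p by ring,
    show p + (a + s) = a + s + p by ring, show p + a = a + p by ring]
  push_cast
  linear_combination g (t + 1) 1 a * h₁ + g (t + 1 + 1) 1 a * blockWeight n s * h₂

theorem vOp_firstBlockSum (p a : ℕ) (m : List ℕ) (g : ℕ → ℕ → ℕ → ℝ) :
    vOp p (firstBlockSum g) (a :: m) = firstBlockSum (vWeight g ((a :: m).sum : ℝ) p) (a :: m) := by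
  induction m generalizing a g with
  | nil =>
    have h := add_one_mul_blockWeight_one p
    simp only [vOp_cons, vOp_nil, firstBlockSum_cons_cons, firstBlockSum_singleton, consWeight,
      vWeight, List.sum_singleton, Nat.add_comm p a]
    push_cast
    linear_combination g 1 1 a * h
  | cons b m ih =>
    rw [vOp_cons, vOp_congr p fun _ => firstBlockSum_cons g a, ih, firstBlockSum_cons_cons, firstBlockSum_cons_cons,
      firstBlockSum_cons_cons, firstBlockSum_cons_cons, List.sum_cons (a := a), Nat.cast_add,
      ← consWeight_vWeight, firstBlockSum_add, firstBlockSum_add, firstBlockSum_smul,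
      firstBlockSum_smul]

noncomputable def alphaWeight (k : ℕ) : ℕ → ℕ → ℕ → ℝ :=
  fun t n s => k.choose (t + 1) * blockWeight n s

theorem alphaval_nil (k : ℕ) : alphaval k [] = 1 := by
  simp [alphaval, splits, Aval]

theorem alphaval_singleton (k a : ℕ) : alphaval k [a] = k * blockWeight 1 a := by
  simp [alphaval, splits, Aval, blockWeight]

theorem alphaval_eq_firstBlockSum (k : ℕ) {l : List ℕ} (hl : l ≠ []) :
    alphaval k l = firstBlockSum (alphaWeight k) l := by
  obtain ⟨a, m, rfl⟩ := List.exists_cons_of_ne_nil hl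
  refine congrArg List.sum (List.map_congr_left fun P hP => ?_)
  obtain ⟨B, P, rfl⟩ := List.exists_cons_of_ne_nil (ne_nil_of_mem_splits_cons hP)
  simp only [firstBlockTerm, alphaWeight, Aval_cons, List.length_cons]
  ring

theorem add_two_mul_choose_add_two (k t : ℕ) :
    ((t : ℝ) + 2) * k.choose (t + 2) = ((k : ℝ) - (t + 1)) * k.choose (t + 1) := by
  rcases le_or_gt (t + 1) k with h | h
  · have := Nat.choose_succ_right_eq k (t + 1)
    rw [← Nat.cast_inj (R := ℝ)] at this
    push_cast [h] at this
    linear_combination this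
  · rw [Nat.choose_eq_zero_of_lt h, Nat.choose_eq_zero_of_lt (by omega)]
    simp

theorem vWeight_alphaWeight (k p : ℕ) (S : ℝ) :
    vWeight (alphaWeight k) S p = (S + k) • alphaWeight k := by
  funext t n s
  have h₁ := blockWeight_add_succ n s p
  have h₂ := add_one_mul_blockWeight_one p
  have h₃ := add_two_mul_choose_add_two k t
  simp only [vWeight, alphaWeight, Pi.smul_apply, smul_eq_mul]
  linear_combination (k.choose (t + 1) : ℝ) * h₁ + (k.choose (t + 2) : ℝ) * blockWeight n s * h₂
    + blockWeight n s * h₃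

theorem stmt17_general (l : List ℕ) (k p₁ : ℕ) :
    (∑ i : Fin l.length, (l.get i : ℝ) * alphaval k (l.set i (l.get i + p₁))) +
      ((p₁ : ℝ) + 1) * ∑ i ∈ Finset.range (l.length + 1), alphaval k (l.insertIdx i p₁)
    = ((l.sum : ℝ) + (k : ℝ)) * alphaval k l := by
  change vOp p₁ (alphaval k) l = _
  rcases l with _ | ⟨a, m⟩
  · rw [vOp_nil, alphaval_singleton, alphaval_nil, List.sum_nil, Nat.cast_zero, zero_add,
      mul_one, mul_left_comm, add_one_mul_blockWeight_one, mul_one]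
  · rw [vOp_congr p₁ fun _ => alphaval_eq_firstBlockSum k, vOp_firstBlockSum,
      vWeight_alphaWeight, firstBlockSum_smul, alphaval_eq_firstBlockSum k (List.cons_ne_nil a m)]

/-- `V^{n₁,…,n_s}_{k,p₁} = (n₁+⋯+n_s+k) α^{n₁,…,n_s}_k`. -/
theorem stmt17 (l : List ℕ) (hne : l ≠ []) (hl : ∀ i ∈ l, 0 < i)
    (k p₁ : ℕ) (hk : 0 < k) (hp : 0 < p₁) :
    (∑ i : Fin l.length, (l.get i : ℝ) * alphaval k (l.set i (l.get i + p₁))) +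
      ((p₁ : ℝ) + 1) * ∑ i ∈ Finset.range (l.length + 1), alphaval k (l.insertIdx i p₁)
    = ((l.sum : ℝ) + (k : ℝ)) * alphaval k l :=
  stmt17_general l k p₁
end
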